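/- arXiv:cs/0510009 — 6 statements merged into one kernel-verified Lean document; each statement's English description precedes it below -/
import Mathlib

section
/- In the Type I-B graph G(p,s), every vertex has degree exactly q = p^s; moreover G(p,s) has exactly q² + 1 variable nodes and exactly q² + 1 constraint nodes. -/
open scoped Classical

namespace TypeIB

/-- The nonzero elements of `F`. -/
abbrev Fstar (F : Type*) [Field F] := {j : F // j ≠ 0}

/-- Variable nodes of the Type I-B graph: the root `r`, the nodes `v_y` (y ∈ F) and the
nodes `(i,j)` with `i ∈ F`, `j ∈ F \ {0}`. -/
abbrev VN (F : Type*) [Field F] := Unit ⊕ (F ⊕ (F × Fstar F))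

/-- Constraint nodes of the Type I-B graph: the root `r'`, the nodes `c_i` (i ∈ F) and the
nodes `(i,j)'` with `i ∈ F`, `j ∈ F \ {0}`. -/
abbrev CN (F : Type*) [Field F] := Unit ⊕ (F ⊕ (F × Fstar F))

/-- Adjacency of the Type I-B graph `G(p,s)`:
`r ~ c_i` for every `i`; `c_i ~ (i,j)` for every `j ≠ 0`; `r' ~ v_y` for every `y`;
`v_y ~ (y,j)'` for every `j ≠ 0`; and `(i,j) ~ (k, j + i·k)'` whenever `j + i·k ≠ 0`,
except that the edges `(0,j) ~ (0,j)'` are omitted. -/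
def adj (F : Type*) [Field F] : VN F → CN F → Prop
  | Sum.inl _, Sum.inl _ => False
  | Sum.inl _, Sum.inr (Sum.inl _) => True              -- r ~ c_i
  | Sum.inl _, Sum.inr (Sum.inr _) => False
  | Sum.inr (Sum.inl _), Sum.inl _ => True              -- v_y ~ r'
  | Sum.inr (Sum.inl _), Sum.inr (Sum.inl _) => False
  | Sum.inr (Sum.inl y), Sum.inr (Sum.inr (a, _)) => a = y   -- v_y ~ (y,b)'
  | Sum.inr (Sum.inr _), Sum.inl _ => False
  | Sum.inr (Sum.inr (i, _)), Sum.inr (Sum.inl k) => k = i   -- c_i ~ (i,j)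
  | Sum.inr (Sum.inr (i, j)), Sum.inr (Sum.inr (a, b)) =>
      (b : F) = (j : F) + i * a ∧ ¬(i = 0 ∧ a = 0)

end TypeIB

/-! Each neighbourhood splits along the three blocks `{root} ⊕ F ⊕ (F × F*)` of the other side.
Only the last block needs a computation: the neighbours `(k, j + i k)'` of `(i, j)` are indexed
by the `k` with `j + i k ≠ 0` (and `k ≠ 0` if `i = 0`), and those `(i, b - i k)` of `(k, b)'` by
the `i` with `b - i k ≠ 0` (and `i ≠ 0` if `k = 0`); in both cases exactly one parameter is
excluded, leaving `q - 1` neighbours, which together with the single neighbour in the middle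
block (or the root) gives degree `q`. -/

namespace TypeIB

theorem natCard_subtype_sum {α β : Type*} [Finite α] [Finite β] (P : α ⊕ β → Prop) :
    Nat.card {x // P x} = Nat.card {a // P (Sum.inl a)} + Nat.card {b // P (Sum.inr b)} := by
  rw [Nat.card_congr Equiv.subtypeSum, Nat.card_sum]

theorem natCard_subtype_ne {α : Type*} [Finite α] (c : α) :
    Nat.card {a // a ≠ c} = Nat.card α - 1 := by
  have := Fintype.ofFinite α
  rw [Nat.card_eq_fintype_card, Fintype.card_subtype_compl, Fintype.card_subtype_eq,
    Nat.card_eq_fintype_card]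

theorem natCard_subtype_fst_eq {α β : Type*} (a : α) :
    Nat.card {x : α × β // x.1 = a} = Nat.card β :=
  Nat.card_congr
    { toFun := fun x => x.1.2
      invFun := fun b => ⟨(a, b), rfl⟩
      left_inv := by rintro ⟨⟨_, _⟩, rfl⟩; rfl
      right_inv := fun _ => rfl }

theorem natCard_subtype_graph {α β : Type*} (S : β → Prop) (g : α → β) (Q : α → Prop) :
    Nat.card {x : α × Subtype S // x.2.1 = g x.1 ∧ Q x.1} = Nat.card {a // S (g a) ∧ Q a} :=
  Nat.card_congr
    { toFun := fun x => ⟨x.1.1, x.2.1 ▸ x.1.2.2, x.2.2⟩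
      invFun := fun a => ⟨(a.1, ⟨g a.1, a.2.1⟩), rfl, a.2.2⟩
      left_inv := by rintro ⟨⟨a, b, hb⟩, rfl : b = g a, _⟩; rfl
      right_inv := fun _ => rfl }

variable {F : Type*} [Field F]

theorem natCard_fstar [Finite F] : Nat.card (Fstar F) = Nat.card F - 1 := natCard_subtype_ne 0

theorem natCard_VN [Finite F] : Nat.card (VN F) = Nat.card F ^ 2 + 1 := by
  obtain ⟨n, hn⟩ := Nat.exists_eq_add_one_of_ne_zero (Nat.card_pos (α := F)).ne'
  rw [Nat.card_sum, Nat.card_sum, Nat.card_prod, natCard_fstar, Nat.card_unique, hn,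
    Nat.add_sub_cancel]
  ring

/- For `t = 0` the excluded point `-u / t` is `0`, which is exactly the point removed by
`¬(t = 0 ∧ x = 0)`. -/
theorem natCard_line_ne_zero [Finite F] {u : F} (hu : u ≠ 0) (t : F) :
    Nat.card {x : F // u + t * x ≠ 0 ∧ ¬(t = 0 ∧ x = 0)} = Nat.card F - 1 := by
  rw [← natCard_subtype_ne (-u / t)]
  refine Nat.card_congr (Equiv.subtypeEquivRight fun x => ?_)
  rcases eq_or_ne t 0 with rfl | ht
  · simp [hu]
  · simp only [ne_eq, eq_div_iff ht, ht, false_and, not_false_eq_true, and_true]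
    exact not_congr ⟨fun h => by linear_combination h, fun h => by linear_combination h⟩

theorem natCard_adj_variable [Finite F] (v : VN F) :
    Nat.card {c // adj F v c} = Nat.card F := by
  have hF : 0 < Nat.card F := Nat.card_pos
  rcases v with _ | y | ⟨i, j⟩ <;> simp only [natCard_subtype_sum, adj]
  · simp
  · rw [natCard_subtype_fst_eq, natCard_fstar]
    simp only [Nat.card_subtype_true, Nat.card_unique, Nat.card_of_isEmpty]
    omega
  · rw [natCard_subtype_graph (· ≠ 0) (fun a => j + i * a) (fun a => ¬(i = 0 ∧ a = 0)),
      natCard_line_ne_zero j.2]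
    simp only [Nat.card_unique, Nat.card_of_isEmpty]
    omega

theorem natCard_adj_constraint [Finite F] (c : CN F) :
    Nat.card {v // adj F v c} = Nat.card F := by
  have hF : 0 < Nat.card F := Nat.card_pos
  rcases c with _ | k | ⟨a, b⟩ <;> simp only [natCard_subtype_sum, adj]
  · simp
  · simp_rw [eq_comm (a := k)]
    rw [natCard_subtype_fst_eq, natCard_fstar]
    simp only [Nat.card_subtype_true, Nat.card_unique, Nat.card_of_isEmpty]
    omega
  · have hsolve (x : F × Fstar F) : (b : F) = x.2 + x.1 * a ∧ ¬(x.1 = 0 ∧ a = 0) ↔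
        (x.2 : F) = b + -a * x.1 ∧ ¬(-a = 0 ∧ x.1 = 0) := by
      rw [neg_eq_zero, and_comm (a := a = 0)]
      exact and_congr_left' ⟨fun h => by linear_combination -h, fun h => by linear_combination -h⟩
    simp_rw [hsolve]
    rw [natCard_subtype_graph (· ≠ 0) (fun i => b + -a * i) (fun i => ¬(-a = 0 ∧ i = 0)),
      natCard_line_ne_zero b.2]
    simp only [Nat.card_unique, Nat.card_of_isEmpty]
    omega

end TypeIB

theorem stmt_2_general (p s : ℕ)
    (F : Type*) [Field F] [Fintype F] (hF : Fintype.card F = p ^ s) :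
    -- every variable node has degree exactly q = p^s
    (∀ v : TypeIB.VN F, Nat.card {c : TypeIB.CN F // TypeIB.adj F v c} = p ^ s) ∧
    -- every constraint node has degree exactly q = p^s
    (∀ c : TypeIB.CN F, Nat.card {v : TypeIB.VN F // TypeIB.adj F v c} = p ^ s) ∧
    -- exactly q² + 1 variable nodes and q² + 1 constraint nodes
    Nat.card (TypeIB.VN F) = (p ^ s) ^ 2 + 1 ∧
    Nat.card (TypeIB.CN F) = (p ^ s) ^ 2 + 1 := by
  rw [← hF, ← Nat.card_eq_fintype_card]
  exact ⟨TypeIB.natCard_adj_variable, TypeIB.natCard_adj_constraint, TypeIB.natCard_VN,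
    TypeIB.natCard_VN⟩

theorem stmt_2 (p s : ℕ) (hp : p.Prime) (hs : 0 < s)
    (F : Type*) [Field F] [Fintype F] (hF : Fintype.card F = p ^ s) :
    -- every variable node has degree exactly q = p^s
    (∀ v : TypeIB.VN F, Nat.card {c : TypeIB.CN F // TypeIB.adj F v c} = p ^ s) ∧
    -- every constraint node has degree exactly q = p^s
    (∀ c : TypeIB.CN F, Nat.card {v : TypeIB.VN F // TypeIB.adj F v c} = p ^ s) ∧
    -- exactly q² + 1 variable nodes and q² + 1 constraint nodes
    Nat.card (TypeIB.VN F) = (p ^ s) ^ 2 + 1 ∧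
    Nat.card (TypeIB.CN F) = (p ^ s) ^ 2 + 1 :=
  stmt_2_general p s F hF
end

section
/- The Type I-B graph G(p,s) contains no cycle of length 4; equivalently, any two distinct variable nodes of G(p,s) have at most one common constraint-node neighbor. Consequently the girth of G(p,s) is at least 6. -/
open scoped Classical

/-- The simple graph on the disjoint union `V ⊕ C` associated to a bipartite adjacency
relation between variable nodes `V` and constraint nodes `C`. -/
def bip {V C : Type*} (adj : V → C → Prop) : SimpleGraph (V ⊕ C) where
  Adj x y :=
    (∃ v c, x = Sum.inl v ∧ y = Sum.inr c ∧ adj v c) ∨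
    (∃ v c, x = Sum.inr c ∧ y = Sum.inl v ∧ adj v c)
  symm := by
    constructor
    rintro x y (⟨v, c, hx, hy, h⟩ | ⟨v, c, hx, hy, h⟩)
    · exact Or.inr ⟨v, c, hy, hx, h⟩
    · exact Or.inl ⟨v, c, hy, hx, h⟩
  loopless := by
    constructor
    rintro x (⟨v, c, hx, hy, h⟩ | ⟨v, c, hx, hy, h⟩) <;> subst hx <;> simp at hy

/-! The node `(i,j)` is adjacent to `(a,b)'` exactly when the point `(a,b)` lies on the line
`y = j + i·x`. Two distinct lines meet in at most one point, and the other pairs of variable nodes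
are immediate, so no two variable nodes share two constraint neighbours: the bipartite graph has no
4-cycle. Being bipartite it has no odd cycle either, hence its girth is at least 6. -/

def AtMostOneCommonNeighbour {V C : Type*} (adj : V → C → Prop) : Prop :=
  ∀ v₁ v₂ : V, v₁ ≠ v₂ → ∀ c₁ c₂ : C, adj v₁ c₁ → adj v₂ c₁ → adj v₁ c₂ → adj v₂ c₂ → c₁ = c₂

section Bipartite

variable {V C : Type*} {adj : V → C → Prop}

@[simp] lemma bip_adj_inl_inr {v : V} {c : C} : (bip adj).Adj (.inl v) (.inr c) ↔ adj v c := by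
  simp [bip]

@[simp] lemma bip_adj_inr_inl {v : V} {c : C} : (bip adj).Adj (.inr c) (.inl v) ↔ adj v c := by
  simp [bip]

@[simp] lemma not_bip_adj_inl_inl {v v' : V} : ¬(bip adj).Adj (.inl v) (.inl v') := by
  simp [bip]

@[simp] lemma not_bip_adj_inr_inr {c c' : C} : ¬(bip adj).Adj (.inr c) (.inr c') := by
  simp [bip]

def bipColoring (adj : V → C → Prop) : (bip adj).Coloring Bool :=
  SimpleGraph.Coloring.mk Sum.isLeft <| by
    rintro (v | c) (v' | c') h <;> simp_all

lemma even_length_of_bip_walk {x : V ⊕ C} (w : (bip adj).Walk x x) : Even w.length :=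
  ((bipColoring adj).even_length_iff_congr w).mpr Iff.rfl

lemma bip_not_adj_cycle_four (H : AtMostOneCommonNeighbour adj) {a b c d : V ⊕ C}
    (hab : (bip adj).Adj a b) (hbc : (bip adj).Adj b c) (hcd : (bip adj).Adj c d)
    (hda : (bip adj).Adj d a) (hac : a ≠ c) (hbd : b ≠ d) : False := by
  rcases a with v₁ | c₁ <;> rcases b with v₂ | c₂ <;> rcases c with v₃ | c₃ <;>
    rcases d with v₄ | c₄ <;> simp only [bip_adj_inl_inr, bip_adj_inr_inl, not_bip_adj_inl_inl,
      not_bip_adj_inr_inr, ne_eq, Sum.inl.injEq, Sum.inr.injEq] at * <;> try contradiction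
  · exact hbd (H v₁ v₃ hac c₂ c₄ hab hbc hda hcd)
  · exact hac (H v₂ v₄ hbd c₁ c₃ hab hda hbc hcd)

lemma bip_isCycle_length_ne_four (H : AtMostOneCommonNeighbour adj) {x : V ⊕ C}
    {w : (bip adj).Walk x x} (hw : w.IsCycle) : w.length ≠ 4 := by
  intro h4
  have hadj (i : ℕ) (hi : i < 4) : (bip adj).Adj (w.getVert i) (w.getVert (i + 1)) :=
    w.adj_getVert_succ (h4 ▸ hi)
  have hlast : w.getVert 4 = w.getVert 0 := by
    rw [← h4, w.getVert_length, w.getVert_zero]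
  exact bip_not_adj_cycle_four H (hadj 0 (by norm_num)) (hadj 1 (by norm_num))
    (hadj 2 (by norm_num)) (hlast ▸ hadj 3 (by norm_num))
    (hw.getVert_sub_one_ne_getVert_add_one (i := 1) (by omega))
    (hw.getVert_sub_one_ne_getVert_add_one (i := 2) (by omega))

theorem six_le_egirth_bip (H : AtMostOneCommonNeighbour adj) : 6 ≤ (bip adj).egirth := by
  refine SimpleGraph.le_egirth.mpr fun x w hw ↦ ?_
  have h3 := hw.three_le_length
  have h4 := bip_isCycle_length_ne_four H hw
  obtain ⟨k, hk⟩ := even_length_of_bip_walk w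
  exact_mod_cast (show 6 ≤ w.length by omega)

end Bipartite

lemma eq_of_lines_meet_twice {F : Type*} [Field F] {i j i' j' a a' : F}
    (hij : i = i' → j ≠ j') (ha : j + i * a = j' + i' * a) (ha' : j + i * a' = j' + i' * a') :
    a = a' := by
  have hprod : (i - i') * (a - a') = 0 := by linear_combination ha - ha'
  rcases mul_eq_zero.mp hprod with hslope | hpoint
  · obtain rfl : i = i' := sub_eq_zero.mp hslope
    exact absurd (by linear_combination ha) (hij rfl)
  · exact sub_eq_zero.mp hpoint

theorem TypeIB.atMostOneCommonNeighbour_adj (F : Type*) [Field F] :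
    AtMostOneCommonNeighbour (TypeIB.adj F) := by
  rintro (⟨⟩ | y | ⟨i, j⟩) (⟨⟩ | y' | ⟨i', j'⟩) hne (⟨⟩ | k | ⟨a, b⟩) (⟨⟩ | k' | ⟨a', b'⟩)
    h₁ h₂ h₃ h₄ <;> simp_all [TypeIB.adj, Subtype.ext_iff, Prod.ext_iff]
  -- only two nodes `(i,j)`, `(i',j')` and two nodes `(a,b)'`, `(a',b')'` are left
  obtain rfl := eq_of_lines_meet_twice hne h₂.1 h₄.1
  simp

theorem stmt_3_general (F : Type*) [Field F] :
    -- any two distinct variable nodes have at most one common constraint-node neighbour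
    (∀ v₁ v₂ : TypeIB.VN F, v₁ ≠ v₂ →
      ∀ c₁ c₂ : TypeIB.CN F,
        TypeIB.adj F v₁ c₁ → TypeIB.adj F v₂ c₁ →
        TypeIB.adj F v₁ c₂ → TypeIB.adj F v₂ c₂ → c₁ = c₂) ∧
    -- consequently the girth of G(p,s) is at least 6
    (6 : ℕ∞) ≤ (bip (TypeIB.adj F)).egirth :=
  ⟨TypeIB.atMostOneCommonNeighbour_adj F, six_le_egirth_bip (TypeIB.atMostOneCommonNeighbour_adj F)⟩

theorem stmt_3 (p s : ℕ) (hp : p.Prime) (hs : 0 < s)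
    (F : Type*) [Field F] [Fintype F] (hF : Fintype.card F = p ^ s) :
    -- any two distinct variable nodes have at most one common constraint-node neighbour
    (∀ v₁ v₂ : TypeIB.VN F, v₁ ≠ v₂ →
      ∀ c₁ c₂ : TypeIB.CN F,
        TypeIB.adj F v₁ c₁ → TypeIB.adj F v₂ c₁ →
        TypeIB.adj F v₁ c₂ → TypeIB.adj F v₂ c₂ → c₁ = c₂) ∧
    -- consequently the girth of G(p,s) is at least 6
    (6 : ℕ∞) ≤ (bip (TypeIB.adj F)).egirth :=
  stmt_3_general F
end

section
/- Let p = 2, so q = 2^s and F = GF(2^s). In the binary code of the Type I-B graph G(2,s), the indicator vector of the set {r, v_0, v_1} ∪ {(0,j) : j ∈ F \ {0}} ∪ {(y,y) : y ∈ F \ {0}} is a codeword of Hamming weight 2q + 1. Consequently the minimum distance d_min of this code satisfies q + 1 ≤ d_min ≤ 2q + 1. -/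
open scoped Classical

/-- Hamming weight of a vector: the number of nonzero coordinates. -/
noncomputable def hamWt {V K : Type*} [Zero K] (x : V → K) : ℕ :=
  Nat.card {v : V // x v ≠ 0}

namespace TypeIB

/-- The code of the Type I-B graph over `K`: vectors indexed by the variable nodes whose sum
over the neighbourhood of each constraint node vanishes. -/
def InCode (F : Type*) [Field F] [Fintype F] (K : Type*) [AddCommMonoid K]
    (x : VN F → K) : Prop :=
  ∀ c : CN F, (∑ v : VN F, if adj F v c then x v else 0) = 0

/-- The minimum distance of the code of the Type I-B graph over `K`: the least Hamming
weight of a nonzero codeword. -/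
noncomputable def dmin (F : Type*) [Field F] [Fintype F]
    (K : Type*) [AddCommMonoid K] : ℕ :=
  sInf {w | ∃ x : VN F → K, InCode F K x ∧ x ≠ 0 ∧ hamWt x = w}

end TypeIB

/-- The indicator vector of the set `{r, v_0, v_1} ∪ {(0,j) : j ≠ 0} ∪ {(y,y) : y ≠ 0}`. -/
noncomputable def cw (F : Type*) [Field F] : TypeIB.VN F → ZMod 2
  | Sum.inl _ => 1
  | Sum.inr (Sum.inl y) => if y = 0 ∨ y = 1 then 1 else 0
  | Sum.inr (Sum.inr (i, j)) => if i = 0 ∨ i = (j : F) then 1 else 0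


/-
Over `GF(2)` a vector is a codeword iff every constraint node has an even number of neighbours in
its support. For the set `S` of the statement every constraint node has exactly two neighbours in
`S`, except `c_0`, all of whose `q` neighbours lie in `S`; and `q` is even.

For the lower bound, a nonzero codeword `x` (over any coefficients) is nonzero at some node
`P = (i, j)`. Each of the `q` constraint nodes at `P` needs a second neighbour where `x` is
nonzero, and these neighbours are distinct since two constraint nodes at `P` have no other common
neighbour. Hence `x` has at least `q + 1` nonzero coordinates.
-/

open Finset Function

namespace TypeIB

lemma sum_ite_eq_card_filter_ne_zero {V : Type*} [Fintype V] (P : V → Prop) (x : V → ZMod 2) :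
    (∑ v, if P v then x v else 0) = (#{v | P v ∧ x v ≠ 0} : ZMod 2) := by
  rw [natCast_card_filter]
  refine sum_congr rfl fun v _ => ?_
  have h01 : ∀ a : ZMod 2, a ≠ 0 → a = 1 := by decide
  by_cases hx : x v = 0 <;> simp [hx, h01]

lemma card_filter_eq_or_eq {α : Type*} [Fintype α] {a b : α} (h : a ≠ b) :
    #{x : α | x = a ∨ x = b} = 2 := by
  rw [← card_pair h]
  congr 1
  ext
  simp

variable {F : Type*} [Field F]

lemma sum_vn [Fintype F] {M : Type*} [AddCommMonoid M] (f : VN F → M) :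
    ∑ v, f v = f (.inl ()) + ∑ y, f (.inr (.inl y)) + ∑ i, ∑ j, f (.inr (.inr (i, j))) := by
  rw [Fintype.sum_sum_type, Fintype.sum_sum_type, Fintype.sum_prod_type, Fintype.sum_unique,
    add_assoc]

lemma card_fstar [Fintype F] : Fintype.card (Fstar F) = Fintype.card F - 1 := by
  simp [Fstar]

@[simp] lemma cw_inl (u : Unit) : cw F (.inl u) = 1 := rfl

@[simp] lemma cw_inr_inl_ne_zero {y : F} : cw F (.inr (.inl y)) ≠ 0 ↔ y = 0 ∨ y = 1 := by
  simp [cw, or_iff_not_imp_left]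

@[simp] lemma cw_inr_inr_ne_zero {i : F} {j : Fstar F} :
    cw F (.inr (.inr (i, j))) ≠ 0 ↔ i = 0 ∨ i = j := by
  simp [cw, or_iff_not_imp_left]

lemma one_add_ne_zero_of_ne_one [CharP F 2] {a : F} (ha : a ≠ 1) : 1 + a ≠ 0 := by
  grind

section Codeword

variable [Fintype F]

theorem hamWt_cw : hamWt (cw F) = 2 * Fintype.card F + 1 := by
  have hq : 1 ≤ Fintype.card F := Fintype.card_pos
  rw [hamWt, Nat.card_eq_fintype_card, Fintype.card_subtype, card_filter, sum_vn, sum_comm]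
  simp only [cw_inl, cw_inr_inl_ne_zero, cw_inr_inr_ne_zero, ← card_filter, ne_eq, one_ne_zero,
    not_false_eq_true, if_true, card_filter_eq_or_eq zero_ne_one,
    fun j : Fstar F => card_filter_eq_or_eq j.2.symm, sum_const, card_univ, card_fstar,
    smul_eq_mul]
  omega

lemma filter_adj_cw_inl :
    ({v | adj F v (.inl ()) ∧ cw F v ≠ 0} : Finset (VN F)) =
      {.inr (.inl 0), .inr (.inl 1)} := by
  ext (_ | y | ⟨i, j⟩) <;> simp [adj]

lemma card_filter_adj_cw_inr_inl_zero :
    #{v | adj F v (.inr (.inl 0)) ∧ cw F v ≠ 0} = Fintype.card F := by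
  rw [card_filter, sum_vn]
  simpa [adj, ite_and, add_comm] using Nat.sub_add_cancel (Fintype.card_pos (α := F))

lemma filter_adj_cw_inr_inl {k : F} (hk : k ≠ 0) :
    ({v | adj F v (.inr (.inl k)) ∧ cw F v ≠ 0} : Finset (VN F)) =
      {.inl (), .inr (.inr (k, ⟨k, hk⟩))} := by
  ext (_ | y | ⟨i, j⟩) <;> simp [adj, Subtype.ext_iff]
  grind

lemma filter_adj_cw_inr_inr_zero (b : Fstar F) :
    ({v | adj F v (.inr (.inr (0, b))) ∧ cw F v ≠ 0} : Finset (VN F)) =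
      {.inr (.inl 0), .inr (.inr (b, b))} := by
  ext (_ | y | ⟨i, j⟩) <;> simp [adj, Subtype.ext_iff] <;> grind

lemma filter_adj_cw_inr_inr_one [CharP F 2] (b : Fstar F) :
    ({v | adj F v (.inr (.inr (1, b))) ∧ cw F v ≠ 0} : Finset (VN F)) =
      {.inr (.inl 1), .inr (.inr (0, b))} := by
  have hb := b.2
  ext (_ | y | ⟨i, j⟩) <;> simp [adj, Subtype.ext_iff] <;> grind

lemma filter_adj_cw_inr_inr [CharP F 2] {a : F} (ha₀ : a ≠ 0) (ha₁ : a ≠ 1) (b : Fstar F) :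
    ({v | adj F v (.inr (.inr (a, b))) ∧ cw F v ≠ 0} : Finset (VN F)) =
      {.inr (.inr (0, b)), .inr (.inr (b / (1 + a),
        ⟨b / (1 + a), div_ne_zero b.2 (one_add_ne_zero_of_ne_one ha₁)⟩))} := by
  have h := one_add_ne_zero_of_ne_one ha₁
  ext (_ | y | ⟨i, j⟩) <;> simp [adj, Subtype.ext_iff, ha₀, eq_div_iff h] <;> grind

lemma even_card_of_charP_two [CharP F 2] : Even (Fintype.card F) :=
  Nat.even_iff.2 (FiniteField.even_card_of_char_two (ringChar.eq F 2))

theorem inCode_cw [CharP F 2] : InCode F (ZMod 2) (cw F) := by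
  intro c
  rw [sum_ite_eq_card_filter_ne_zero, ZMod.natCast_eq_zero_iff_even]
  rcases c with _ | k | ⟨a, b⟩
  · simp [filter_adj_cw_inl]
  · by_cases hk : k = 0
    · rw [hk, card_filter_adj_cw_inr_inl_zero]
      exact even_card_of_charP_two
    · simp [filter_adj_cw_inr_inl hk]
  · by_cases ha₀ : a = 0
    · simp [ha₀, filter_adj_cw_inr_inr_zero]
    by_cases ha₁ : a = 1
    · simp [ha₁, filter_adj_cw_inr_inr_one]
    · rw [filter_adj_cw_inr_inr ha₀ ha₁, card_pair]
      · exact even_two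
      · simp [(div_ne_zero b.2 (one_add_ne_zero_of_ne_one ha₁)).symm]

end Codeword

lemma grid_eq_of_adj_of_adj {i : F} {j : Fstar F} {w : VN F} {c₁ c₂ : CN F}
    (h₁ : adj F (.inr (.inr (i, j))) c₁) (h₂ : adj F (.inr (.inr (i, j))) c₂)
    (hw₁ : adj F w c₁) (hw₂ : adj F w c₂) (hc : c₁ ≠ c₂) :
    w = .inr (.inr (i, j)) := by
  -- The main case: a common neighbour `(i', j')` of `(a₁, b₁)'` and `(a₂, b₂)'` satisfies
  -- `(i' - i) * (a₁ - a₂) = 0`.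
  rcases c₁ with _ | k₁ | ⟨a₁, b₁⟩ <;> rcases c₂ with _ | k₂ | ⟨a₂, b₂⟩ <;>
    rcases w with _ | y | ⟨i', j'⟩ <;> simp [adj, Subtype.ext_iff] at * <;> grind

/-- The `q` constraint nodes adjacent to the variable node `(i, j)`: `(a, j + i a)'` for the
`q - 1` values of `a` for which this is an edge, and `c_i` for the remaining one. -/
noncomputable def gridNbr (i : F) (j : Fstar F) (a : F) : CN F :=
  if h : (j : F) + i * a = 0 ∨ (i = 0 ∧ a = 0) then .inr (.inl i)
  else .inr (.inr (a, ⟨j + i * a, fun hz => h (.inl hz)⟩))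

lemma adj_gridNbr (i : F) (j : Fstar F) (a : F) : adj F (.inr (.inr (i, j))) (gridNbr i j a) := by
  unfold gridNbr
  split_ifs with h
  · exact rfl
  · exact ⟨rfl, fun h' => h (.inr h')⟩

lemma gridNbr_injective (i : F) (j : Fstar F) : Injective (gridNbr i j) := by
  intro a₁ a₂ h
  unfold gridNbr at h
  have hj := j.2
  split_ifs at h with h₁ h₂ h₂ <;> simp at h
  · grind
  · exact h.1

section LowerBound

variable [Fintype F] {K : Type*} [AddCommMonoid K] {x : VN F → K}

lemma exists_ne_adj_ne_zero (hx : InCode F K x) {v : VN F} {c : CN F} (hvc : adj F v c)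
    (hv : x v ≠ 0) : ∃ w ≠ v, adj F w c ∧ x w ≠ 0 := by
  by_contra! h
  refine hv ?_
  rw [← hx c, sum_eq_single v (fun w _ hwv => ?_) (by simp), if_pos hvc]
  by_cases hwc : adj F w c
  · rw [if_pos hwc, h w hwv hwc]
  · rw [if_neg hwc]

lemma exists_grid_ne_zero (hx : InCode F K x) (hx0 : x ≠ 0) :
    ∃ i j, x (.inr (.inr (i, j))) ≠ 0 := by
  by_contra! h
  refine hx0 (funext fun v => ?_)
  by_contra hv
  -- Besides nodes `(i, j)`, `c_0` is adjacent only to `r`, and `(y, 1)'` only to `v_y`.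
  rcases v with _ | y | ⟨i, j⟩
  · obtain ⟨_ | _ | ⟨i, j⟩, hwv, hw, hxw⟩ :=
      exists_ne_adj_ne_zero hx (v := .inl ()) (c := .inr (.inl 0)) trivial hv
    exacts [hwv rfl, hw, hxw (h i j)]
  · obtain ⟨_ | y' | ⟨i, j⟩, hwv, hw, hxw⟩ :=
      exists_ne_adj_ne_zero hx (v := .inr (.inl y)) (c := .inr (.inr (y, ⟨1, one_ne_zero⟩)))
        rfl hv
    exacts [hw, hwv (hw ▸ rfl), hxw (h i j)]
  · exact hv (h i j)

theorem card_add_one_le_hamWt (hx : InCode F K x) (hx0 : x ≠ 0) :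
    Fintype.card F + 1 ≤ hamWt x := by
  obtain ⟨i, j, hP⟩ := exists_grid_ne_zero hx hx0
  choose w hwP hw hxw using fun a => exists_ne_adj_ne_zero hx (adj_gridNbr i j a) hP
  let g : Option F → {v // x v ≠ 0} := Option.elim' ⟨_, hP⟩ fun a => ⟨w a, hxw a⟩
  have hg : Injective g := by
    refine Option.injective_iff.2 ⟨fun a₁ a₂ h => ?_, ?_⟩
    · by_contra hne
      have hw₁₂ : w a₁ = w a₂ := congrArg Subtype.val h
      exact hwP a₁ (grid_eq_of_adj_of_adj (adj_gridNbr i j a₁) (adj_gridNbr i j a₂) (hw a₁)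
        (hw₁₂ ▸ hw a₂) ((gridNbr_injective i j).ne hne))
    · rintro ⟨a, ha⟩
      exact hwP a (congrArg Subtype.val ha)
  simpa [hamWt, Nat.card_eq_fintype_card] using Nat.card_le_card_of_injective g hg

end LowerBound

end TypeIB

theorem stmt_4_general (s : ℕ)
    (F : Type*) [Field F] [Fintype F] (hF : Fintype.card F = 2 ^ s) :
    -- the indicator vector is a codeword of the binary code of G(2,s)
    TypeIB.InCode F (ZMod 2) (cw F) ∧
    -- of Hamming weight 2q + 1
    hamWt (cw F) = 2 * 2 ^ s + 1 ∧
    -- consequently q + 1 ≤ d_min ≤ 2q + 1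
    2 ^ s + 1 ≤ TypeIB.dmin F (ZMod 2) ∧
    TypeIB.dmin F (ZMod 2) ≤ 2 * 2 ^ s + 1 := by
  have : CharP F 2 := charP_of_card_eq_prime_pow hF
  have hcode := TypeIB.inCode_cw (F := F)
  have hwt : hamWt (cw F) = 2 * 2 ^ s + 1 := by rw [TypeIB.hamWt_cw, hF]
  have hne : cw F ≠ 0 := fun h => one_ne_zero (congrFun h (.inl ()))
  refine ⟨hcode, hwt, le_csInf ⟨_, cw F, hcode, hne, rfl⟩ ?_,
    Nat.sInf_le ⟨cw F, hcode, hne, hwt⟩⟩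
  rintro _ ⟨x, hx, hx0, rfl⟩
  exact hF ▸ TypeIB.card_add_one_le_hamWt hx hx0

theorem stmt_4 (s : ℕ) (hs : 0 < s)
    (F : Type*) [Field F] [Fintype F] (hF : Fintype.card F = 2 ^ s) :
    -- the indicator vector is a codeword of the binary code of G(2,s)
    TypeIB.InCode F (ZMod 2) (cw F) ∧
    -- of Hamming weight 2q + 1
    hamWt (cw F) = 2 * 2 ^ s + 1 ∧
    -- consequently q + 1 ≤ d_min ≤ 2q + 1
    2 ^ s + 1 ≤ TypeIB.dmin F (ZMod 2) ∧
    TypeIB.dmin F (ZMod 2) ≤ 2 * 2 ^ s + 1 :=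
  stmt_4_general s F hF
end

section
/- Let p be an odd prime and q = p^s. The binary code of the Type II ℓ=3 graph P(p,s) consists exactly of the zero vector and the all-ones vector; that is, it is the [n, 1, n] binary repetition code of length n = q² + q + 1. -/
/-! Write `r`, `u a`, `v i j` for the values of a codeword at the root, at `(x,a)` and at `(i,j)`,
and `S = ∑ v`. Work in characteristic 2 with `q` odd, so that a constant summed over `F` is itself.
Summing the checks of the `q` parallel lines `(a,b)'` for a fixed slope `a` gives `u a = S`, and
then the check at `c_x` gives `r = S`. Summing the checks of the `q` lines through a point `(i₀,j₀)`
counts that point `q` times and every other row once; each row sums to `r` by the check at `c_i`,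
and `q - 1` is even, hence `v i₀ j₀ = r`. So every codeword is constant, and conversely every
constant is a codeword because each check has `q + 1` neighbours. -/

open scoped Classical

namespace TypeII3

/-- Variable nodes of the Type II ℓ=3 graph: the root `r`, the nodes `(x,j)` (j ∈ F, with
`x` a formal symbol), and the nodes `(i,j)` (i, j ∈ F). -/
abbrev VN (F : Type*) := Unit ⊕ (F ⊕ (F × F))

/-- Constraint nodes of the Type II ℓ=3 graph: `c_x`, the nodes `c_i` (i ∈ F), and the
nodes `(a,b)'` (a, b ∈ F). -/
abbrev CN (F : Type*) := Unit ⊕ (F ⊕ (F × F))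

/-- Adjacency of the Type II ℓ=3 graph `P(p,s)`:
`r ~ c_x`; `r ~ c_i`; `c_x ~ (x,j)`; `c_i ~ (i,j)`; `(x,j) ~ (j,b)'` for every `b`; and
`(i,j) ~ (a, j + i·a)'` for every `a`. -/
def adj (F : Type*) [Field F] : VN F → CN F → Prop
  | Sum.inl _, Sum.inl _ => True                             -- r ~ c_x
  | Sum.inl _, Sum.inr (Sum.inl _) => True                   -- r ~ c_i
  | Sum.inl _, Sum.inr (Sum.inr _) => False
  | Sum.inr (Sum.inl _), Sum.inl _ => True                   -- (x,j) ~ c_x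
  | Sum.inr (Sum.inl _), Sum.inr (Sum.inl _) => False
  | Sum.inr (Sum.inl j), Sum.inr (Sum.inr (a, _)) => a = j   -- (x,j) ~ (j,b)'
  | Sum.inr (Sum.inr _), Sum.inl _ => False
  | Sum.inr (Sum.inr (i, _)), Sum.inr (Sum.inl k) => k = i   -- c_i ~ (i,j)
  | Sum.inr (Sum.inr (i, j)), Sum.inr (Sum.inr (a, b)) => b = j + i * a

end TypeII3

namespace TypeII3

/-- The code of the Type II ℓ=3 graph over `K`. -/
def InCode (F : Type*) [Field F] [Fintype F] (K : Type*) [AddCommMonoid K]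
    (x : VN F → K) : Prop :=
  ∀ c : CN F, (∑ v : VN F, if adj F v c then x v else 0) = 0

/-- The minimum distance of the code of the Type II ℓ=3 graph over `K`. -/
noncomputable def dmin (F : Type*) [Field F] [Fintype F]
    (K : Type*) [AddCommMonoid K] : ℕ :=
  sInf {w | ∃ x : VN F → K, InCode F K x ∧ x ≠ 0 ∧ hamWt x = w}

end TypeII3

namespace TypeII3

section Constraints

variable {F : Type*} [Field F] [Fintype F] {K : Type*} [AddCommMonoid K]

theorem sum_adj_cx (x : VN F → K) :
    (∑ v : VN F, if adj F v (Sum.inl ()) then x v else 0)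
      = x (Sum.inl ()) + ∑ j, x (Sum.inr (Sum.inl j)) := by
  simp [Fintype.sum_sum_type, adj]

theorem sum_adj_c (x : VN F → K) (k : F) :
    (∑ v : VN F, if adj F v (Sum.inr (Sum.inl k)) then x v else 0)
      = x (Sum.inl ()) + ∑ j, x (Sum.inr (Sum.inr (k, j))) := by
  simp only [adj, Fintype.sum_sum_type, Finset.univ_unique, PUnit.default_eq_unit, ↓reduceIte,
    Finset.sum_singleton, Finset.sum_const_zero, Fintype.sum_prod_type, zero_add]
  rw [Finset.sum_eq_single_of_mem k (Finset.mem_univ _)] <;> simp +contextual [eq_comm]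

theorem sum_adj_line (x : VN F → K) (a b : F) :
    (∑ v : VN F, if adj F v (Sum.inr (Sum.inr (a, b))) then x v else 0)
      = x (Sum.inr (Sum.inl a)) + ∑ i, x (Sum.inr (Sum.inr (i, b - i * a))) := by
  simp [Fintype.sum_sum_type, Fintype.sum_prod_type, adj, ← sub_eq_iff_eq_add]

theorem inCode_iff (x : VN F → K) :
    InCode F K x ↔
      x (Sum.inl ()) + ∑ j, x (Sum.inr (Sum.inl j)) = 0 ∧
      (∀ k, x (Sum.inl ()) + ∑ j, x (Sum.inr (Sum.inr (k, j))) = 0) ∧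
      ∀ a b, x (Sum.inr (Sum.inl a)) + ∑ i, x (Sum.inr (Sum.inr (i, b - i * a))) = 0 := by
  simp only [InCode, Sum.forall, Prod.forall, sum_adj_cx, sum_adj_c, sum_adj_line]
  simp

theorem sum_sum_sub_mul (v : F → F → K) (a : F) :
    ∑ b, ∑ i, v i (b - i * a) = ∑ i, ∑ j, v i j := by
  rw [Finset.sum_comm]
  exact Fintype.sum_congr _ _ fun i => Fintype.sum_equiv (Equiv.subRight (i * a)) _ _ fun _ => rfl

theorem sum_mul_add_of_ne_zero (f : F → K) {c : F} (hc : c ≠ 0) (j : F) :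
    ∑ a, f (c * a + j) = ∑ a, f a :=
  Fintype.sum_equiv ((Equiv.mulLeft₀ c hc).trans (Equiv.addRight j)) _ _ fun _ => rfl

end Constraints

section CharTwoOddCard

variable {F : Type*} [Fintype F] {K : Type*} [Ring K] [CharP K 2]

theorem sum_const_of_odd_card (hq : Odd (Fintype.card F)) (c : K) : ∑ _ : F, c = c := by
  rw [Finset.sum_const, Finset.card_univ, nsmul_eq_mul,
    natCast_eq_one_of_odd_of_two_eq_zero hq CharTwo.two_eq_zero, one_mul]

variable [Field F]

theorem eq_sum_sum_of_line_sums (hq : Odd (Fintype.card F)) {u : F → K} {v : F → F → K}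
    (hline : ∀ a b, u a + ∑ i, v i (b - i * a) = 0) (a : F) : u a = ∑ i, ∑ j, v i j := by
  have hsum := Finset.sum_eq_zero fun b (_ : b ∈ Finset.univ) => hline a b
  rw [Finset.sum_add_distrib, sum_const_of_odd_card hq, sum_sum_sub_mul] at hsum
  exact CharTwo.add_eq_zero.mp hsum

theorem eq_of_line_sums_through (hq : Odd (Fintype.card F)) {r : K} {u : F → K}
    {v : F → F → K} (hrow : ∀ i, ∑ j, v i j = r) (hu : ∀ a, u a = r)
    (hline : ∀ a b, u a + ∑ i, v i (b - i * a) = 0) (i₀ j₀ : F) : v i₀ j₀ = r := by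
  -- the `q` lines through `(i₀, j₀)` are `(a, j₀ + i₀ * a)'`, one for each slope `a`
  have hpencil : ∑ i, ∑ a, v i (j₀ + i₀ * a - i * a) = r := by
    have hsum := Finset.sum_eq_zero fun a (_ : a ∈ Finset.univ) => hline a (j₀ + i₀ * a)
    rw [Finset.sum_add_distrib, Fintype.sum_congr _ _ hu, sum_const_of_odd_card hq,
      Finset.sum_comm] at hsum
    exact (CharTwo.add_eq_zero.mp hsum).symm
  have hother : ∀ i ∈ ({i₀}ᶜ : Finset F), ∑ a, v i (j₀ + i₀ * a - i * a) = r := by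
    intro i hi
    have hc : i₀ - i ≠ 0 := sub_ne_zero.mpr (Ne.symm (by simpa using hi))
    simp_rw [show ∀ a, j₀ + i₀ * a - i * a = (i₀ - i) * a + j₀ from fun a => by ring]
    rw [sum_mul_add_of_ne_zero (v i) hc, hrow]
  have hcompl : ∑ i ∈ ({i₀}ᶜ : Finset F), r = 0 := by
    have := Fintype.sum_eq_add_sum_compl i₀ fun _ => r
    rwa [sum_const_of_odd_card hq, left_eq_add] at this
  rw [Fintype.sum_eq_add_sum_compl i₀, Finset.sum_congr rfl hother, hcompl, add_zero] at hpencil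
  simpa [sum_const_of_odd_card hq] using hpencil

theorem eq_root_of_inCode (hq : Odd (Fintype.card F)) {x : VN F → K} (hx : InCode F K x)
    (w : VN F) : x w = x (Sum.inl ()) := by
  obtain ⟨hcx, hc, hline⟩ := (inCode_iff x).mp hx
  have hu := eq_sum_sum_of_line_sums hq (u := fun a => x (Sum.inr (Sum.inl a)))
    (v := fun i j => x (Sum.inr (Sum.inr (i, j)))) hline
  have hr : x (Sum.inl ()) = ∑ i, ∑ j, x (Sum.inr (Sum.inr (i, j))) := by
    rwa [Fintype.sum_congr _ _ hu, sum_const_of_odd_card hq, CharTwo.add_eq_zero] at hcx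
  rcases w with ⟨⟩ | a | ⟨i, j⟩
  · rfl
  · rw [hu, hr]
  · exact eq_of_line_sums_through hq (fun i => (CharTwo.add_eq_zero.mp (hc i)).symm)
      (fun a => (hu a).trans hr.symm) hline i j

theorem inCode_const (hq : Odd (Fintype.card F)) (c : K) : InCode F K fun _ => c := by
  simp [inCode_iff, sum_const_of_odd_card hq, CharTwo.add_self_eq_zero]

theorem inCode_iff_exists_const (hq : Odd (Fintype.card F)) (x : VN F → K) :
    InCode F K x ↔ ∃ c, x = fun _ => c :=
  ⟨fun hx => ⟨_, funext (eq_root_of_inCode hq hx)⟩, by rintro ⟨c, rfl⟩; exact inCode_const hq c⟩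

end CharTwoOddCard

theorem card_VN (F : Type*) [Fintype F] :
    Nat.card (VN F) = Fintype.card F ^ 2 + Fintype.card F + 1 := by
  simp [Nat.card_eq_fintype_card, Fintype.card_sum, Fintype.card_prod]
  ring

end TypeII3

theorem stmt_12_general (p s : ℕ) (hp : p.Prime) (hodd : p ≠ 2)
    (F : Type*) [Field F] [Fintype F] (hF : Fintype.card F = p ^ s) :
    -- the binary code of P(p,s) consists exactly of the zero vector and the all-ones vector
    (∀ x : TypeII3.VN F → ZMod 2,
      TypeII3.InCode F (ZMod 2) x ↔ (x = 0 ∨ x = fun _ => 1)) ∧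
    -- it is a repetition code of length n = q² + q + 1
    Nat.card (TypeII3.VN F) = (p ^ s) ^ 2 + p ^ s + 1 := by
  have hq : Odd (Fintype.card F) := hF ▸ (hp.odd_of_ne_two hodd).pow
  refine ⟨fun x => ?_, hF ▸ TypeII3.card_VN F⟩
  rw [TypeII3.inCode_iff_exists_const hq]
  constructor
  · rintro ⟨c, rfl⟩
    fin_cases c
    exacts [Or.inl rfl, Or.inr rfl]
  · rintro (rfl | rfl)
    exacts [⟨0, rfl⟩, ⟨1, rfl⟩]

theorem stmt_12 (p s : ℕ) (hp : p.Prime) (hodd : p ≠ 2) (hs : 0 < s)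
    (F : Type*) [Field F] [Fintype F] (hF : Fintype.card F = p ^ s) :
    -- the binary code of P(p,s) consists exactly of the zero vector and the all-ones vector
    (∀ x : TypeII3.VN F → ZMod 2,
      TypeII3.InCode F (ZMod 2) x ↔ (x = 0 ∨ x = fun _ => 1)) ∧
    -- it is a repetition code of length n = q² + q + 1
    Nat.card (TypeII3.VN F) = (p ^ s) ^ 2 + p ^ s + 1 :=
  stmt_12_general p s hp hodd F hF
end

section
/- Let p = 2, s = 1, F = GF(2), and f(i,j,k,t) = j + (i+1)·t. Then the binary code of the Type II ℓ=4 graph Q(2,1,f) has length 15, dimension 5, and minimum distance exactly 6; in particular its minimum distance equals the tree bound T(3,8) = 6. -/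
open scoped Classical

namespace TypeII4

/-- Variable nodes of the Type II ℓ=4 graph: the root `r`, the nodes `(x,j)` (j ∈ F), the
nodes `(i,j)` (i, j ∈ F), and the nodes `(i,j,k)'` (i, j, k ∈ F). -/
abbrev VN (F : Type*) := Unit ⊕ (F ⊕ ((F × F) ⊕ (F × F × F)))

/-- Constraint nodes of the Type II ℓ=4 graph: `c_x`, the nodes `c_i` (i ∈ F), the nodes
`(x,i,j)_c` (i, j ∈ F), and the nodes `(i,j,k)_c` (i, j, k ∈ F). -/
abbrev CN (F : Type*) := Unit ⊕ (F ⊕ ((F × F) ⊕ (F × F × F)))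

/-- Adjacency of the Type II ℓ=4 graph `Q(p,s,f)`:
`r ~ c_x`; `r ~ c_i`; `c_x ~ (x,j)`; `c_i ~ (i,j)`; `(x,i) ~ (x,i,j)_c`;
`(i,j) ~ (i,j,k)_c`; `(x,i,j)_c ~ (i,j,t)'` for every `t`; and
`(i,j,k)_c ~ (t, k + i·t, f(i,j,k,t))'` for every `t`. -/
def adj (F : Type*) [Field F] (f : F → F → F → F → F) : VN F → CN F → Prop
  | Sum.inl _, Sum.inl _ => True                                  -- r ~ c_x
  | Sum.inl _, Sum.inr (Sum.inl _) => True                        -- r ~ c_i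
  | Sum.inr (Sum.inl _), Sum.inl _ => True                        -- (x,j) ~ c_x
  | Sum.inr (Sum.inl i), Sum.inr (Sum.inr (Sum.inl (i', _))) =>
      i' = i                                                      -- (x,i) ~ (x,i,j)_c
  | Sum.inr (Sum.inr (Sum.inl (i, _))), Sum.inr (Sum.inl k) =>
      k = i                                                       -- c_i ~ (i,j)
  | Sum.inr (Sum.inr (Sum.inl (i, j))), Sum.inr (Sum.inr (Sum.inr (i', j', _))) =>
      i' = i ∧ j' = j                                             -- (i,j) ~ (i,j,k)_c
  | Sum.inr (Sum.inr (Sum.inr (a, b, _))), Sum.inr (Sum.inr (Sum.inl (i, j))) =>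
      i = a ∧ j = b                                               -- (x,i,j)_c ~ (i,j,t)'
  | Sum.inr (Sum.inr (Sum.inr (a, b, c))), Sum.inr (Sum.inr (Sum.inr (i, j, k))) =>
      b = k + i * a ∧ c = f i j k a               -- (i,j,k)_c ~ (t, k+i·t, f(i,j,k,t))'
  | _, _ => False

end TypeII4

/-- The tree bound `T(d,g)` for `d ≥ 2` and even girth `g ≥ 6`:
`T(d,g) = 1 + d + d(d−1) + … + d(d−1)^{(g−6)/4}` when `g ≡ 2 (mod 4)`, and
`T(d,g) = 1 + d + d(d−1) + … + d(d−1)^{(g−8)/4} + (d−1)^{(g−4)/4}` when `g ≡ 0 (mod 4)`. -/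
def treeBound (d g : ℕ) : ℕ :=
  if g % 4 = 2 then
    1 + d * ∑ k ∈ Finset.range ((g - 6) / 4 + 1), (d - 1) ^ k
  else
    1 + d * ∑ k ∈ Finset.range ((g - 8) / 4 + 1), (d - 1) ^ k + (d - 1) ^ ((g - 4) / 4)

/-- The binary code of the graph Q(2,1,f) with f(i,j,k,t) = j + (i+1)·t, as a
GF(2)-subspace of GF(2)^V: the vectors summing to zero over the neighbourhood of every
constraint node. -/
noncomputable def binCode : Submodule (ZMod 2) (TypeII4.VN (ZMod 2) → ZMod 2) :=
  ⨅ c : TypeII4.CN (ZMod 2),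
    LinearMap.ker
      (∑ v ∈ Finset.univ.filter
          (fun v => TypeII4.adj (ZMod 2) (fun i j _ t => j + (i + 1) * t) v c),
        LinearMap.proj (R := ZMod 2) (φ := fun _ : TypeII4.VN (ZMod 2) => ZMod 2) v)

set_option synthInstance.maxSize 1000

namespace Q21Aux

open TypeII4

abbrev F2 := ZMod 2

/-- The defining function of the code. -/
def ff : F2 → F2 → F2 → F2 → F2 := fun i j _ t => j + (i + 1) * t

instance adjDec (F : Type*) [Field F] [DecidableEq F] (f : F → F → F → F → F)
    (v : VN F) (c : CN F) : Decidable (adj F f v c) := by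
  rcases v with _ | (_ | (⟨i, j⟩ | ⟨a, b, cc⟩)) <;>
    rcases c with _ | (_ | (⟨i', j'⟩ | ⟨i2, j2, k2⟩)) <;>
      simp only [adj] <;> infer_instance

/-- Shorthand names for the 15 variable nodes. -/
def vr : VN F2 := Sum.inl ()
def vX (i : F2) : VN F2 := Sum.inr (Sum.inl i)
def vY (i j : F2) : VN F2 := Sum.inr (Sum.inr (Sum.inl (i, j)))
def vZ (i j k : F2) : VN F2 := Sum.inr (Sum.inr (Sum.inr (i, j, k)))

lemma casesF2 : ∀ t : F2, t = 0 ∨ t = 1 := by decide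

lemma filt_x :
    Finset.univ.filter (fun v => adj F2 ff v (Sum.inl ())) = {vr, vX 0, vX 1} := by decide

lemma filt_c (i : F2) :
    Finset.univ.filter (fun v => adj F2 ff v (Sum.inr (Sum.inl i))) =
      {vr, vY i 0, vY i 1} := by
  rcases casesF2 i with rfl | rfl <;> decide

lemma filt_xc (i j : F2) :
    Finset.univ.filter (fun v => adj F2 ff v (Sum.inr (Sum.inr (Sum.inl (i, j))))) =
      {vX i, vZ i j 0, vZ i j 1} := by
  rcases casesF2 i with rfl | rfl <;> rcases casesF2 j with rfl | rfl <;> decide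

lemma filt_zc (i j k : F2) :
    Finset.univ.filter (fun v => adj F2 ff v (Sum.inr (Sum.inr (Sum.inr (i, j, k))))) =
      {vY i j, vZ 0 k j, vZ 1 (k + i) (j + i + 1)} := by
  rcases casesF2 i with rfl | rfl <;> rcases casesF2 j with rfl | rfl <;>
    rcases casesF2 k with rfl | rfl <;> decide

lemma sum3 {v1 v2 v3 : VN F2} (h12 : v1 ≠ v2) (h13 : v1 ≠ v3) (h23 : v2 ≠ v3)
    (x : VN F2 → F2) :
    ∑ v ∈ ({v1, v2, v3} : Finset (VN F2)), x v = x v1 + x v2 + x v3 := by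
  rw [Finset.sum_insert (by simp [h12, h13]), Finset.sum_insert (by simp [h23]),
    Finset.sum_singleton, add_assoc]

/-- Explicit form of the 15 parity checks. -/
abbrev Echeck (x : VN F2 → F2) : Prop :=
  (x vr + x (vX 0) + x (vX 1) = 0) ∧
  (∀ i, x vr + x (vY i 0) + x (vY i 1) = 0) ∧
  (∀ i j, x (vX i) + x (vZ i j 0) + x (vZ i j 1) = 0) ∧
  (∀ i j k, x (vY i j) + x (vZ 0 k j) + x (vZ 1 (k + i) (j + i + 1)) = 0)

lemma mem_iff (x : VN F2 → F2) : x ∈ binCode ↔ Echeck x := by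
  have base : x ∈ binCode ↔
      ∀ c : CN F2, ∑ v ∈ Finset.univ.filter (fun v => adj F2 ff v c), x v = 0 := by
    simp only [binCode, Submodule.mem_iInf, LinearMap.mem_ker, LinearMap.coe_sum,
      Finset.sum_apply, LinearMap.proj_apply]
    refine iff_of_eq ?_
    change _ = ∀ c : CN F2, ∑ v ∈ Finset.univ.filter
      (fun v => adj F2 (fun i j _ t => j + (i + 1) * t) v c), x v = 0
    congr!
  rw [base]
  constructor
  · intro h
    refine ⟨?_, fun i => ?_, fun i j => ?_, fun i j k => ?_⟩
    · have := h (Sum.inl ())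
      rwa [filt_x, sum3 (by simp [vr, vX]) (by simp [vr, vX]) (by simp [vX])] at this
    · have := h (Sum.inr (Sum.inl i))
      rwa [filt_c, sum3 (by simp [vr, vY]) (by simp [vr, vY]) (by simp [vY])] at this
    · have := h (Sum.inr (Sum.inr (Sum.inl (i, j))))
      rwa [filt_xc, sum3 (by simp [vX, vZ]) (by simp [vX, vZ]) (by simp [vZ])] at this
    · have := h (Sum.inr (Sum.inr (Sum.inr (i, j, k))))
      rwa [filt_zc, sum3 (by simp [vY, vZ]) (by simp [vY, vZ]) (by simp [vZ])] at this
  · rintro ⟨h1, h2, h3, h4⟩ (_ | (i | (⟨i, j⟩ | ⟨i, j, k⟩)))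
    · rw [filt_x, sum3 (by simp [vr, vX]) (by simp [vr, vX]) (by simp [vX])]
      exact h1
    · rw [filt_c, sum3 (by simp [vr, vY]) (by simp [vr, vY]) (by simp [vY])]
      exact h2 i
    · rw [filt_xc, sum3 (by simp [vX, vZ]) (by simp [vX, vZ]) (by simp [vZ])]
      exact h3 i j
    · rw [filt_zc, sum3 (by simp [vY, vZ]) (by simp [vY, vZ]) (by simp [vZ])]
      exact h4 i j k

/-- Every codeword is zero once its five "information" coordinates vanish. -/
lemma eq_zero_of_information (x : VN F2 → F2) (h : Echeck x)
    (ha : x vr = 0) (hb : x (vX 0) = 0) (hc : x (vY 0 0) = 0)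
    (hd : x (vY 1 0) = 0) (he : x (vZ 0 0 0) = 0) : x = 0 := by
  obtain ⟨h1, h2, h3, h4⟩ := h
  have two : (1 : F2) + 1 = 0 := by decide
  have eX1 : x (vX 1) = 0 := by simpa [ha, hb] using h1
  have eY01 : x (vY 0 1) = 0 := by simpa [ha, hc] using h2 0
  have eY11 : x (vY 1 1) = 0 := by simpa [ha, hd] using h2 1
  have eZ001 : x (vZ 0 0 1) = 0 := by simpa [hb, he] using h3 0 0
  have eZ101 : x (vZ 1 0 1) = 0 := by simpa [hc, he] using h4 0 0 0
  have eZ110 : x (vZ 1 1 0) = 0 := by simpa [hd, he, two] using h4 1 0 0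
  have eZ100 : x (vZ 1 0 0) = 0 := by simpa [eY01, eZ001, two] using h4 0 1 0
  have eZ111 : x (vZ 1 1 1) = 0 := by simpa [eY11, eZ001, two] using h4 1 1 0
  have eZ010 : x (vZ 0 1 0) = 0 := by simpa [hd, eZ100, two] using h4 1 0 1
  have eZ011 : x (vZ 0 1 1) = 0 := by simpa [hb, eZ010] using h3 0 1
  funext v
  simp only [Pi.zero_apply]
  rcases v with _ | (i | (⟨i, j⟩ | ⟨i, j, k⟩))
  · exact ha
  · rcases casesF2 i with rfl | rfl
    · exact hb
    · exact eX1
  · rcases casesF2 i with rfl | rfl <;> rcases casesF2 j with rfl | rfl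
    · exact hc
    · exact eY01
    · exact hd
    · exact eY11
  · rcases casesF2 i with rfl | rfl <;> rcases casesF2 j with rfl | rfl <;>
      rcases casesF2 k with rfl | rfl
    · exact he
    · exact eZ001
    · exact eZ010
    · exact eZ011
    · exact eZ100
    · exact eZ101
    · exact eZ110
    · exact eZ111

/-- Parameter space of the code: the values at the five information coordinates. -/
abbrev P := F2 × F2 × F2 × F2 × F2

/-- Generator map: recover the full codeword from the five information coordinates. -/
def G (y : P) : VN F2 → F2 := fun v =>
  match y, v with
  | (a, _, _, _, _), Sum.inl _ => a
  | (a, b, _, _, _), Sum.inr (Sum.inl i) => i * a + b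
  | (a, _, c, d, _), Sum.inr (Sum.inr (Sum.inl (i, j))) => j * a + (1 + i) * c + i * d
  | (a, b, c, d, e), Sum.inr (Sum.inr (Sum.inr (i, j, k))) =>
      (i + j + i * k) * a + (i + j + k) * b + (i + j) * c + j * d + e

lemma echeck_G : ∀ y : P, Echeck (G y) := by decide

lemma G_inj : ∀ y y' : P, G y = G y' → y = y' := by decide

/-- The inclusion of the parameter space into the code. -/
def jmap (y : P) : binCode := ⟨G y, (mem_iff _).2 (echeck_G y)⟩

lemma jmap_inj : Function.Injective jmap := fun y y' h =>
  G_inj y y' (congrArg Subtype.val h)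

/-- The information-coordinate extraction map. -/
def R (x : VN F2 → F2) : P := (x vr, x (vX 0), x (vY 0 0), x (vY 1 0), x (vZ 0 0 0))

lemma G_R (x : VN F2 → F2) (h : x ∈ binCode) : G (R x) = x := by
  have hmem : G (R x) - x ∈ binCode := sub_mem ((mem_iff _).2 (echeck_G (R x))) h
  have hz : G (R x) - x = 0 := by
    have two : (1 : F2) + 1 = 0 := by decide
    refine eq_zero_of_information _ ((mem_iff _).1 hmem) ?_ ?_ ?_ ?_ ?_ <;>
      simp [G, R, vr, vX, vY, vZ, two]
  exact sub_eq_zero.1 hz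

lemma hamWt_eq (x : VN F2 → F2) :
    hamWt x = (Finset.univ.filter fun v => x v ≠ 0).card := by
  rw [hamWt, Nat.card_eq_fintype_card]
  exact Fintype.card_subtype _

lemma wt_bound : ∀ y : P, y ≠ (0, 0, 0, 0, 0) →
    6 ≤ (Finset.univ.filter fun v => G y v ≠ 0).card := by decide

lemma G_zero : G (0, 0, 0, 0, 0) = 0 := by decide

lemma G_ne_zero : G (0, 0, 0, 1, 0) ≠ 0 := by decide

lemma wt_example :
    (Finset.univ.filter fun v => G (0, 0, 0, 1, 0) v ≠ 0).card = 6 := by decide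

end Q21Aux

theorem stmt_16 :
    -- the binary code of Q(2,1,f) has length 15,
    Nat.card (TypeII4.VN (ZMod 2)) = 15 ∧
    -- dimension 5,
    Module.finrank (ZMod 2) binCode = 5 ∧
    -- minimum distance exactly 6,
    sInf {w | ∃ x : TypeII4.VN (ZMod 2) → ZMod 2,
      x ∈ binCode ∧ x ≠ 0 ∧ hamWt x = w} = 6 ∧
    -- which equals the tree bound T(3,8) = 6
    treeBound 3 8 = 6 := by
  open Q21Aux in
  refine ⟨by rw [Nat.card_eq_fintype_card]; decide, ?_, ?_, by decide⟩
  · -- dimension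
    have rinj : Function.Injective (fun z : binCode => R z.1) := by
      rintro ⟨z, hz⟩ ⟨z', hz'⟩ h
      have : G (R z) = G (R z') := by simp only [h]
      rw [G_R z hz, G_R z' hz'] at this
      exact Subtype.ext this
    have hcard : Fintype.card binCode = 32 := by
      have hP : Fintype.card P = 32 := by decide
      have h1 := Fintype.card_le_of_injective jmap jmap_inj
      have h2 := Fintype.card_le_of_injective _ rinj
      rw [hP] at h1 h2
      omega
    have := Module.card_eq_pow_finrank (K := ZMod 2) (V := binCode)
    rw [hcard, ZMod.card 2] at this
    have h5 : (2 : ℕ) ^ 5 = 2 ^ Module.finrank (ZMod 2) binCode := this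
    exact (Nat.pow_right_injective (le_refl 2) h5.symm)
  · -- minimum distance
    have hmem6 : 6 ∈ {w | ∃ x : TypeII4.VN (ZMod 2) → ZMod 2,
        x ∈ binCode ∧ x ≠ 0 ∧ hamWt x = w} := by
      exact ⟨G (0, 0, 0, 1, 0), (mem_iff _).2 (echeck_G _), G_ne_zero,
        by rw [hamWt_eq]; exact wt_example⟩
    refine le_antisymm (Nat.sInf_le hmem6) (le_csInf ⟨6, hmem6⟩ ?_)
    rintro w ⟨x, hx, hne, rfl⟩
    have hGx : G (R x) = x := G_R x hx
    have hR : R x ≠ (0, 0, 0, 0, 0) := by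
      intro h
      exact hne (by rw [← hGx, h, G_zero])
    rw [← hGx, hamWt_eq]
    exact wt_bound (R x) hR
end

section
/- Let p ≥ 2, n ≥ 1, let c ∈ {0, 1, …, p−1}^n have Hamming weight w ≥ 1, and let F be the n × p pseudocodeword matrix with F_{i,k} = 1 if c_i = k and F_{i,k} = 0 otherwise. Then the p-ary symmetric channel weight of F equals w, i.e., w_PSC(F) = w. -/
open scoped Classical

/-- A dominating choice for an `n × p` matrix `M`: a set `S` of distinct row indices
together with nonzero column indices `j i` (for `i ∈ S`) such that
`Σ_{i ∈ S} M_{i, j i} ≥ Σ_{i ∉ S} (1 − M_{i,0})`. -/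
def IsDominating {n p : ℕ} [NeZero p] (M : Fin n → Fin p → ℝ)
    (S : Finset (Fin n)) (j : Fin n → Fin p) : Prop :=
  (∀ i ∈ S, j i ≠ 0) ∧ (∑ i ∈ Sᶜ, (1 - M i 0)) ≤ ∑ i ∈ S, M i (j i)

/-- `e(F)`: the least natural number `e` admitting a dominating choice with `e` rows. -/
noncomputable def eNum {n p : ℕ} [NeZero p] (M : Fin n → Fin p → ℝ) : ℕ :=
  sInf {e | ∃ (S : Finset (Fin n)) (j : Fin n → Fin p), S.card = e ∧ IsDominating M S j}

/-- The weight of a pseudocodeword matrix `M` on the p-ary symmetric channel: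
`2·e(F) − 1` if some dominating choice with `e(F)` rows satisfies the dominating
inequality strictly, and `2·e(F)` if the maximum over such choices is equality. -/
noncomputable def wPSC {n p : ℕ} [NeZero p] (M : Fin n → Fin p → ℝ) : ℕ :=
  if 0 < sSup {x : ℝ | ∃ (S : Finset (Fin n)) (j : Fin n → Fin p),
      S.card = eNum M ∧ IsDominating M S j ∧
      x = (∑ i ∈ S, M i (j i)) - ∑ i ∈ Sᶜ, (1 - M i 0)}
  then 2 * eNum M - 1
  else 2 * eNum M

theorem stmt_17 (p n : ℕ) [NeZero p] (hp : 2 ≤ p) (hn : 1 ≤ n)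
    (c : Fin n → Fin p) (hw : 1 ≤ Nat.card {i : Fin n // c i ≠ 0}) :
    -- the p-ary symmetric channel weight of the pseudocodeword matrix of the codeword c
    -- equals the Hamming weight of c
    wPSC (fun i k => if c i = k then (1 : ℝ) else 0) =
      Nat.card {i : Fin n // c i ≠ 0} := by
  classical
  set M : Fin n → Fin p → ℝ := fun i k => if c i = k then 1 else 0 with hM
  set T : Finset (Fin n) := Finset.univ.filter (fun i => c i ≠ 0) with hT
  have hcard : Nat.card {i : Fin n // c i ≠ 0} = T.card := by
    rw [Nat.card_eq_fintype_card, Fintype.card_subtype, hT]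
  rw [hcard] at hw ⊢
  set w : ℕ := T.card with hwdef
  -- sum computations
  have hrhs : ∀ S : Finset (Fin n), (∑ i ∈ Sᶜ, (1 - M i 0)) = ((T \ S).card : ℝ) := by
    intro S
    have h1 : (T \ S : Finset (Fin n)) = Sᶜ.filter (fun i => c i ≠ 0) := by
      ext i
      simp [hT, Finset.mem_sdiff, Finset.mem_filter, and_comm]
    rw [h1, ← Finset.sum_boole]
    refine Finset.sum_congr rfl fun i _ => ?_
    by_cases h : c i = 0 <;> simp [hM, h]
  have hlhs : ∀ (S : Finset (Fin n)) (j : Fin n → Fin p),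
      (∑ i ∈ S, M i (j i)) = ((S.filter (fun i => c i = j i)).card : ℝ) := by
    intro S j
    rw [← Finset.sum_boole]
  -- consequences of domination
  have hkey : ∀ (S : Finset (Fin n)) (j : Fin n → Fin p), IsDominating M S j →
      (T \ S).card ≤ (S.filter (fun i => c i = j i)).card ∧
      (S.filter (fun i => c i = j i)) ⊆ S ∩ T := by
    rintro S j ⟨hj, hle⟩
    rw [hrhs S, hlhs S j] at hle
    constructor
    · exact_mod_cast hle
    · intro i hi
      rw [Finset.mem_filter] at hi
      rw [Finset.mem_inter]
      refine ⟨hi.1, ?_⟩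
      rw [hT, Finset.mem_filter]
      exact ⟨Finset.mem_univ i, fun h0 => hj i hi.1 (hi.2.symm.trans h0)⟩
  have hkey2 : ∀ (S : Finset (Fin n)) (j : Fin n → Fin p), IsDominating M S j →
      w ≤ 2 * (S ∩ T).card := by
    intro S j hd
    obtain ⟨h1, h2⟩ := hkey S j hd
    have h3 := Finset.card_le_card h2
    have h4 : (T ∩ S).card + (T \ S).card = w := Finset.card_inter_add_card_sdiff T S
    rw [Finset.inter_comm T S] at h4
    omega
  -- existence of a dominating choice of given size with explicit slack
  have hexist : ∀ k, k ≤ w → w ≤ 2 * k →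
      ∃ (S : Finset (Fin n)) (j : Fin n → Fin p), S.card = k ∧ IsDominating M S j ∧
        (∑ i ∈ S, M i (j i)) - (∑ i ∈ Sᶜ, (1 - M i 0)) = 2 * (k : ℝ) - w := by
    intro k hk1 hk2
    obtain ⟨S, hST, hScard⟩ := Finset.exists_subset_card_eq hk1
    have hfe : S.filter (fun i => c i = c i) = S := by simp
    have hsd : (T \ S).card = w - k := by rw [Finset.card_sdiff_of_subset hST, hScard]
    refine ⟨S, c, hScard, ⟨?_, ?_⟩, ?_⟩
    · intro i hi
      have := hST hi
      rw [hT, Finset.mem_filter] at this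
      exact this.2
    · rw [hrhs S, hlhs S c, hfe, hsd, hScard, Nat.cast_sub hk1]
      have : (w : ℝ) ≤ 2 * k := by exact_mod_cast hk2
      linarith
    · rw [hrhs S, hlhs S c, hfe, hsd, hScard, Nat.cast_sub hk1]
      ring
  -- the minimimum e
  have he : eNum M = (w + 1) / 2 := by
    obtain ⟨S, j, hS, hd, _⟩ := hexist ((w + 1) / 2) (by omega) (by omega)
    unfold eNum
    apply le_antisymm
    · exact Nat.sInf_le ⟨S, j, hS, hd⟩
    · apply le_csInf
      · exact ⟨(w + 1) / 2, S, j, hS, hd⟩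
      rintro e ⟨S', j', hS', hd'⟩
      have h1 := hkey2 S' j' hd'
      have h2 : (S' ∩ T).card ≤ S'.card := Finset.card_le_card Finset.inter_subset_left
      omega
  unfold wPSC
  rw [he]
  rcases Nat.mod_two_eq_zero_or_one w with hpar | hpar
  · -- even case : sup of slack is 0
    rw [if_neg]
    · omega
    · rw [not_lt]
      apply Real.sSup_le _ le_rfl
      rintro x ⟨S, j, hS, hd, rfl⟩
      rw [hlhs S j, hrhs S]
      obtain ⟨h1, h2⟩ := hkey S j hd
      have h3 := Finset.card_le_card h2
      have h4 : (S ∩ T).card ≤ S.card := Finset.card_le_card Finset.inter_subset_left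
      have h5 : (T ∩ S).card + (T \ S).card = w := Finset.card_inter_add_card_sdiff T S
      rw [Finset.inter_comm T S] at h5
      have h6 : (S.filter (fun i => c i = j i)).card ≤ (T \ S).card := by omega
      have h7 : ((S.filter (fun i => c i = j i)).card : ℝ) ≤ ((T \ S).card : ℝ) := by
        exact_mod_cast h6
      linarith
  · -- odd case : sup of slack is 1
    rw [if_pos]
    · omega
    · obtain ⟨S, j, hS, hd, hdiff⟩ := hexist ((w + 1) / 2) (by omega) (by omega)
      have h2k : 2 * ((w + 1) / 2) = w + 1 := by omega
      have h2k' : 2 * (((w + 1) / 2 : ℕ) : ℝ) = (w : ℝ) + 1 := by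
        have := congrArg (fun m : ℕ => (m : ℝ)) h2k
        push_cast at this
        linarith
      have hx : (∑ i ∈ S, M i (j i)) - (∑ i ∈ Sᶜ, (1 - M i 0)) = 1 := by
        rw [hdiff]; linarith
      have hbdd : BddAbove {x : ℝ | ∃ (S : Finset (Fin n)) (j : Fin n → Fin p),
          S.card = (w + 1) / 2 ∧ IsDominating M S j ∧
          x = (∑ i ∈ S, M i (j i)) - ∑ i ∈ Sᶜ, (1 - M i 0)} := by
        refine ⟨(w : ℝ), ?_⟩
        rintro x ⟨S', j', hS', hd', rfl⟩
        rw [hlhs S' j', hrhs S']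
        have hf : (S'.filter (fun i => c i = j' i)).card ≤ w := by
          have := Finset.card_filter_le S' (fun i => c i = j' i)
          omega
        have hf' : ((S'.filter (fun i => c i = j' i)).card : ℝ) ≤ (w : ℝ) := by
          exact_mod_cast hf
        have hsd : (0 : ℝ) ≤ ((T \ S').card : ℝ) := Nat.cast_nonneg _
        linarith
      have hle : (1 : ℝ) ≤ sSup {x : ℝ | ∃ (S : Finset (Fin n)) (j : Fin n → Fin p),
          S.card = (w + 1) / 2 ∧ IsDominating M S j ∧
          x = (∑ i ∈ S, M i (j i)) - ∑ i ∈ Sᶜ, (1 - M i 0)} :=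
        le_csSup hbdd ⟨S, j, hS, hd, hx.symm⟩
      linarith
end
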